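/- arXiv:2605.26657 — 2 statements merged into one kernel-verified Lean document; each statement's English description precedes it below -/
import Mathlib

section
/- (Step-0 commitment, Q-value form.) Fix a horizon H ≥ 2, a damage rate κ > 0, a reward exponent β ∈ (0,1], and effort levels 0 < e_L < e_H ≤ 1 with κ·H·e_H ≤ 1. If the commitment condition e_H^β − e_L^β > 2(H−1)·κ·ē_β·(e_H − e_L) holds, where ē_β = (e_L^β + e_H^β)/2, then Q(e_H) > Q(e_L), where Q(e) = e^β + V(κe) and V is the uniform-policy continuation value. -/
/-- Continuation return along effort sequence `e` from initial damage `d`. -/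
noncomputable def contReturn (H : ℕ) (κ β : ℝ) (e : ℕ → ℝ) (d : ℝ) : ℝ :=
  ∑ t ∈ Finset.range (H - 1),
    (e t) ^ β * (1 - (d + κ * ∑ s ∈ Finset.range t, e s)) ^ 2

/-- Uniform-policy continuation value: the average of `contReturn` over all
`2^(H-1)` effort sequences with values in `{eL, eH}`, encoded by
`c : Fin (H-1) → Bool` (`true ↦ eH`, `false ↦ eL`). -/
noncomputable def contValue (H : ℕ) (κ β eL eH : ℝ) (d : ℝ) : ℝ :=
  (2 : ℝ) ^ (-((H : ℤ) - 1)) *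
    ∑ c : Fin (H - 1) → Bool,
      contReturn H κ β
        (fun t => if ht : t < H - 1 then (if c ⟨t, ht⟩ then eH else eL) else 0) d

/-- State-action value at zero damage: `Q(e) = e^β + V(κ e)`. -/
noncomputable def Qval (H : ℕ) (κ β eL eH : ℝ) (e : ℝ) : ℝ :=
  e ^ β + contValue H κ β eL eH (κ * e)

lemma sum_bool_apply {n : ℕ} (i : Fin n) (g : Bool → ℝ) :
    ∑ c : Fin n → Bool, g (c i) = 2 ^ n * (g true + g false) / 2 := by
  have hinv : Function.Involutive
      (fun c : Fin n → Bool => Function.update c i (!(c i))) := by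
    intro c; funext j
    by_cases hj : j = i
    · subst hj; simp
    · simp [Function.update_of_ne hj]
  have hflip : ∑ c : Fin n → Bool, g (c i) = ∑ c : Fin n → Bool, g (!(c i)) := by
    apply Fintype.sum_bijective _ hinv.bijective
    intro c; simp
  have h2 : (2:ℝ) * ∑ c : Fin n → Bool, g (c i)
      = ∑ c : Fin n → Bool, (g (c i) + g (!(c i))) := by
    rw [Finset.sum_add_distrib, ← hflip]; ring
  have h3 : ∑ c : Fin n → Bool, (g (c i) + g (!(c i)))
      = (2:ℝ) ^ n * (g true + g false) := by
    have : ∀ c : Fin n → Bool, g (c i) + g (!(c i)) = g true + g false := by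
      intro c; cases c i <;> simp [add_comm]
    rw [Finset.sum_congr rfl (fun c _ => this c), Finset.sum_const]
    simp [Fintype.card_fun]; ring
  rw [eq_div_iff (by norm_num : (2:ℝ) ≠ 0)]
  linarith [h2, h3]

theorem stmt_3 (H : ℕ) (hH : 2 ≤ H) (κ β eL eH : ℝ)
    (hκ : 0 < κ) (hβ0 : 0 < β) (hβ1 : β ≤ 1)
    (heL : 0 < eL) (hLH : eL < eH) (heH : eH ≤ 1)
    (hbound : κ * (H : ℝ) * eH ≤ 1)
    (hcommit : eH ^ β - eL ^ β >
      2 * ((H : ℝ) - 1) * κ * ((eL ^ β + eH ^ β) / 2) * (eH - eL)) :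
    Qval H κ β eL eH eH > Qval H κ β eL eH eL := by
  set n := H - 1 with hn
  have hncast : ((H : ℝ) - 1) = (n : ℝ) := by
    rw [hn]; push_cast [Nat.cast_sub (by omega : 1 ≤ H)]; ring
  have hzpow : (2:ℝ) ^ (-((H : ℤ) - 1)) = ((2:ℝ) ^ n)⁻¹ := by
    have : ((H : ℤ) - 1) = (n : ℤ) := by omega
    rw [this, zpow_neg, zpow_natCast]
  have hpow2 : (0:ℝ) < 2 ^ n := by positivity
  -- effort sequence for a code c
  set f : (Fin n → Bool) → ℕ → ℝ :=
    fun c t => if ht : t < n then (if c ⟨t, ht⟩ then eH else eL) else 0 with hf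
  have hf_nonneg : ∀ c t, 0 ≤ f c t := by
    intro c t
    by_cases ht : t < n
    · simp only [hf, dif_pos ht]; split <;> linarith
    · simp [hf, dif_neg ht]
  set K : ℝ := 2 * κ * (eH - eL) with hK
  -- per-sequence bound
  have hstep : ∀ c : Fin n → Bool,
      contReturn H κ β (f c) (κ * eL) - contReturn H κ β (f c) (κ * eH)
        ≤ ∑ t ∈ Finset.range n, (f c t) ^ β * K := by
    intro c
    unfold contReturn
    rw [← Finset.sum_sub_distrib]
    apply Finset.sum_le_sum
    intro t _
    have hS : 0 ≤ ∑ s ∈ Finset.range t, f c s :=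
      Finset.sum_nonneg fun s _ => hf_nonneg c s
    set S := ∑ s ∈ Finset.range t, f c s
    have hpow : 0 ≤ (f c t) ^ β := Real.rpow_nonneg (hf_nonneg c t) β
    have hsq : (1 - (κ * eL + κ * S)) ^ 2 - (1 - (κ * eH + κ * S)) ^ 2 ≤ K := by
      have h1 : κ * eL + κ * S ≤ κ * eH + κ * S := by nlinarith
      have h2 : 0 ≤ κ * eL + κ * S := by nlinarith
      nlinarith [mul_nonneg (sub_nonneg.2 h1)
        (by linarith : (0:ℝ) ≤ (κ * eL + κ * S) + (κ * eH + κ * S))]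
    nlinarith [mul_le_mul_of_nonneg_left hsq hpow]
  -- sum over sequences
  have hsum : ∑ c : Fin n → Bool,
      (contReturn H κ β (f c) (κ * eL) - contReturn H κ β (f c) (κ * eH))
        ≤ (n : ℝ) * (2 ^ n * ((eL ^ β + eH ^ β) / 2) * K) := by
    calc ∑ c : Fin n → Bool,
        (contReturn H κ β (f c) (κ * eL) - contReturn H κ β (f c) (κ * eH))
        ≤ ∑ c : Fin n → Bool, ∑ t ∈ Finset.range n, (f c t) ^ β * K :=
          Finset.sum_le_sum fun c _ => hstep c
      _ = ∑ t ∈ Finset.range n, ∑ c : Fin n → Bool, (f c t) ^ β * K :=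
          Finset.sum_comm
      _ = ∑ t ∈ Finset.range n, (2:ℝ) ^ n * ((eL ^ β + eH ^ β) / 2) * K := by
          apply Finset.sum_congr rfl
          intro t ht
          have htn : t < n := Finset.mem_range.mp ht
          have : ∀ c : Fin n → Bool, (f c t) ^ β * K
              = (fun b : Bool => (if b then eH else eL) ^ β * K) (c ⟨t, htn⟩) := by
            intro c; simp [hf, dif_pos htn]
          rw [Finset.sum_congr rfl (fun c _ => this c),
            sum_bool_apply ⟨t, htn⟩ (fun b => (if b then eH else eL) ^ β * K)]
          norm_num
          ring
      _ = (n : ℝ) * (2 ^ n * ((eL ^ β + eH ^ β) / 2) * K) := by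
          rw [Finset.sum_const, Finset.card_range]; push_cast; ring
  -- conclude
  have hVdiff : contValue H κ β eL eH (κ * eL) - contValue H κ β eL eH (κ * eH)
      ≤ (n : ℝ) * ((eL ^ β + eH ^ β) / 2) * K := by
    unfold contValue
    rw [hzpow, ← mul_sub, ← Finset.sum_sub_distrib]
    rw [inv_mul_le_iff₀ hpow2]
    calc ∑ c : Fin n → Bool,
        (contReturn H κ β (f c) (κ * eL) - contReturn H κ β (f c) (κ * eH))
        ≤ (n : ℝ) * (2 ^ n * ((eL ^ β + eH ^ β) / 2) * K) := hsum
      _ = 2 ^ n * ((n : ℝ) * ((eL ^ β + eH ^ β) / 2) * K) := by ring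
  have hc2 : 2 * ((H : ℝ) - 1) * κ * ((eL ^ β + eH ^ β) / 2) * (eH - eL)
      = (n : ℝ) * ((eL ^ β + eH ^ β) / 2) * K := by
    rw [hncast, hK]; ring
  unfold Qval
  rw [hc2] at hcommit
  linarith
end

section
/- (First ascent step increases the greedy-action probability.) Fix a horizon H ≥ 2, a damage rate κ > 0, a reward exponent β ∈ (0,1], effort levels 0 < e_L < e_H ≤ 1 with κ·H·e_H ≤ 1, and a learning rate α > 0. Suppose the commitment condition e_H^β − e_L^β > 2(H−1)·κ·ē_β·(e_H − e_L) holds, where ē_β = (e_L^β + e_H^β)/2. Let J(θ) = σ(θ)·Q(e_H) + (1 − σ(θ))·Q(e_L), with σ the logistic sigmoid and Q(e) = e^β + V(κe) for V the uniform-policy continuation value, and let θ₁ = α·J'(0) be the parameter after one gradient-ascent step from θ₀ = 0. Then σ(θ₁) > 1/2. -/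
/-- The logistic sigmoid `σ(θ) = 1 / (1 + exp(-θ))`. -/
noncomputable def sigmoid (θ : ℝ) : ℝ := 1 / (1 + Real.exp (-θ))

/-!
Since `σ'(0) = 1/4`, the gradient step gives `θ₁ = α (Q(e_H) - Q(e_L)) / 4`, so it suffices that
`Q(e_L) < Q(e_H)`. Starting from damage `d'` instead of `d ≤ d'` costs at most `2 (d' - d)` per
unit of effort reward at every later step, because `(1 - u)² - (1 - v)² ≤ 2 (v - u)` for
`0 ≤ u ≤ v`. Under the uniform policy the expected total effort reward is `(H - 1) ē_β`, hence
`V(κ e_L) - V(κ e_H) ≤ 2 (H - 1) κ ē_β (e_H - e_L)`, which the commitment condition makes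
smaller than the immediate gain `e_H^β - e_L^β`.
-/

open Finset

lemma sigmoid_eq_real_sigmoid : sigmoid = Real.sigmoid :=
  funext fun _ => one_div _

lemma hasDerivAt_sigmoid_mix_zero (a b : ℝ) :
    HasDerivAt (fun θ => sigmoid θ * a + (1 - sigmoid θ) * b) ((a - b) / 4) 0 := by
  have h : HasDerivAt sigmoid (1 / 4) 0 := by
    rw [sigmoid_eq_real_sigmoid]
    convert Real.hasDerivAt_sigmoid 0 using 1
    norm_num [Real.sigmoid_zero]
  rw [show (a - b) / 4 = 1 / 4 * a + -(1 / 4) * b by ring]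
  exact (h.mul_const a).add ((h.const_sub 1).mul_const b)

lemma sq_one_sub_sub_sq_one_sub_le {u v : ℝ} (hu : 0 ≤ u) (huv : u ≤ v) :
    (1 - u) ^ 2 - (1 - v) ^ 2 ≤ 2 * (v - u) := by
  nlinarith

lemma contReturn_sub_contReturn_le (H : ℕ) {κ : ℝ} (β : ℝ) {e : ℕ → ℝ} {d d' : ℝ}
    (hκ : 0 ≤ κ) (he : ∀ t, 0 ≤ e t) (hd : 0 ≤ d) (hdd' : d ≤ d') :
    contReturn H κ β e d - contReturn H κ β e d' ≤
      2 * (d' - d) * ∑ t ∈ range (H - 1), e t ^ β := by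
  rw [contReturn, contReturn, ← sum_sub_distrib, mul_sum]
  refine sum_le_sum fun t _ => ?_
  have hpast : 0 ≤ κ * ∑ s ∈ range t, e s := mul_nonneg hκ (sum_nonneg fun s _ => he s)
  have hstep := sq_one_sub_sub_sq_one_sub_le (v := d' + κ * ∑ s ∈ range t, e s)
    (add_nonneg hd hpast) (by linarith)
  rw [add_sub_add_right_eq_sub] at hstep
  calc e t ^ β * (1 - (d + κ * ∑ s ∈ range t, e s)) ^ 2
        - e t ^ β * (1 - (d' + κ * ∑ s ∈ range t, e s)) ^ 2
      = e t ^ β * ((1 - (d + κ * ∑ s ∈ range t, e s)) ^ 2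
          - (1 - (d' + κ * ∑ s ∈ range t, e s)) ^ 2) := by ring
    _ ≤ e t ^ β * (2 * (d' - d)) := mul_le_mul_of_nonneg_left hstep (Real.rpow_nonneg (he t) β)
    _ = 2 * (d' - d) * e t ^ β := mul_comm _ _

noncomputable def effortSeq (H : ℕ) (eL eH : ℝ) (c : Fin (H - 1) → Bool) (t : ℕ) : ℝ :=
  if ht : t < H - 1 then (if c ⟨t, ht⟩ then eH else eL) else 0

lemma contValue_eq_sum_effortSeq (H : ℕ) (κ β eL eH d : ℝ) :
    contValue H κ β eL eH d =
      (2 : ℝ) ^ (-((H : ℤ) - 1)) * ∑ c, contReturn H κ β (effortSeq H eL eH c) d :=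
  rfl

lemma effortSeq_nonneg (H : ℕ) {eL eH : ℝ} (heL : 0 ≤ eL) (heH : 0 ≤ eH)
    (c : Fin (H - 1) → Bool) (t : ℕ) : 0 ≤ effortSeq H eL eH c t := by
  unfold effortSeq
  split_ifs <;> first | assumption | exact le_rfl

lemma sum_sum_effortSeq_rpow (H : ℕ) (β eL eH : ℝ) :
    ∑ c : Fin (H - 1) → Bool, ∑ t ∈ range (H - 1), effortSeq H eL eH c t ^ β =
      (H - 1 : ℕ) * (2 ^ (H - 1) * ((eL ^ β + eH ^ β) / 2)) := by
  have hrow : ∀ t ∈ range (H - 1), ∑ c : Fin (H - 1) → Bool, effortSeq H eL eH c t ^ β =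
      2 ^ (H - 1) * ((eL ^ β + eH ^ β) / 2) := by
    intro t ht
    have ht : t < H - 1 := mem_range.1 ht
    let g : Bool → ℝ := fun b => (if b then eH else eL) ^ β
    have hcol : ∀ c : Fin (H - 1) → Bool, effortSeq H eL eH c t ^ β = g (c ⟨t, ht⟩) :=
      fun c => by simp only [g, effortSeq, dif_pos ht]
    rw [sum_congr rfl fun c _ => hcol c, ← Fintype.piFinset_univ,
      Fintype.sum_piFinset_apply g, Fintype.sum_bool, Fintype.card_fin, card_univ,
      Fintype.card_bool, nsmul_eq_mul, Nat.cast_pow, Nat.cast_ofNat]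
    obtain ⟨n, hn⟩ := Nat.exists_eq_add_of_lt ht
    rw [hn, Nat.add_sub_cancel, pow_succ]
    simp only [g, if_true, Bool.false_eq_true, if_false]
    ring
  rw [sum_comm, sum_congr rfl hrow, sum_const, card_range, nsmul_eq_mul]

lemma two_zpow_neg_sub_one {H : ℕ} (hH : 1 ≤ H) :
    (2 : ℝ) ^ (-((H : ℤ) - 1)) = ((2 : ℝ) ^ (H - 1))⁻¹ := by
  rw [← zpow_natCast, ← zpow_neg, Nat.cast_sub hH, Nat.cast_one]

lemma contValue_sub_contValue_le {H : ℕ} (hH : 1 ≤ H) {κ : ℝ} (β : ℝ) {eL eH d d' : ℝ}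
    (hκ : 0 ≤ κ) (heL : 0 ≤ eL) (heH : 0 ≤ eH) (hd : 0 ≤ d) (hdd' : d ≤ d') :
    contValue H κ β eL eH d - contValue H κ β eL eH d' ≤
      2 * ((H : ℝ) - 1) * ((eL ^ β + eH ^ β) / 2) * (d' - d) := by
  rw [contValue_eq_sum_effortSeq, contValue_eq_sum_effortSeq, ← mul_sub, ← sum_sub_distrib,
    two_zpow_neg_sub_one hH]
  have hsum : ∑ c, (contReturn H κ β (effortSeq H eL eH c) d
      - contReturn H κ β (effortSeq H eL eH c) d') ≤
      2 * (d' - d) * ((H - 1 : ℕ) * (2 ^ (H - 1) * ((eL ^ β + eH ^ β) / 2))) := by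
    rw [← sum_sum_effortSeq_rpow, mul_sum]
    exact sum_le_sum fun c _ => contReturn_sub_contReturn_le H β hκ
      (effortSeq_nonneg H heL heH c) hd hdd'
  calc ((2 : ℝ) ^ (H - 1))⁻¹ * ∑ c, (contReturn H κ β (effortSeq H eL eH c) d
        - contReturn H κ β (effortSeq H eL eH c) d')
      ≤ ((2 : ℝ) ^ (H - 1))⁻¹ *
          (2 * (d' - d) * ((H - 1 : ℕ) * (2 ^ (H - 1) * ((eL ^ β + eH ^ β) / 2)))) :=
        mul_le_mul_of_nonneg_left hsum (by positivity)
    _ = 2 * ((H : ℝ) - 1) * ((eL ^ β + eH ^ β) / 2) * (d' - d) := by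
        rw [Nat.cast_sub hH, Nat.cast_one]
        field_simp

lemma Qval_lt_Qval {H : ℕ} (hH : 1 ≤ H) {κ β eL eH : ℝ}
    (hκ : 0 ≤ κ) (heL : 0 ≤ eL) (hLH : eL ≤ eH)
    (hcommit : eH ^ β - eL ^ β >
      2 * ((H : ℝ) - 1) * κ * ((eL ^ β + eH ^ β) / 2) * (eH - eL)) :
    Qval H κ β eL eH eL < Qval H κ β eL eH eH := by
  have hV := contValue_sub_contValue_le hH β (eL := eL) (eH := eH) hκ heL (heL.trans hLH)
    (mul_nonneg hκ heL) (mul_le_mul_of_nonneg_left hLH hκ)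
  rw [Qval, Qval]
  linarith

theorem stmt_9_general (H : ℕ) (hH : 2 ≤ H) (κ β eL eH α : ℝ)
    (hκ : 0 < κ) (heL : 0 < eL) (hLH : eL < eH) (hα : 0 < α)
    (hcommit : eH ^ β - eL ^ β >
      2 * ((H : ℝ) - 1) * κ * ((eL ^ β + eH ^ β) / 2) * (eH - eL)) :
    sigmoid (α * deriv (fun θ : ℝ =>
      sigmoid θ * Qval H κ β eL eH eH + (1 - sigmoid θ) * Qval H κ β eL eH eL) 0)
      > 1 / 2 := by
  have hQ := Qval_lt_Qval (by omega) hκ.le heL.le hLH.le hcommit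
  rw [(hasDerivAt_sigmoid_mix_zero _ _).deriv, sigmoid_eq_real_sigmoid, gt_iff_lt, one_div,
    ← Real.sigmoid_zero]
  exact Real.sigmoid_lt (mul_pos hα (by linarith))

theorem stmt_9 (H : ℕ) (hH : 2 ≤ H) (κ β eL eH α : ℝ)
    (hκ : 0 < κ) (hβ0 : 0 < β) (hβ1 : β ≤ 1)
    (heL : 0 < eL) (hLH : eL < eH) (heH : eH ≤ 1)
    (hbound : κ * (H : ℝ) * eH ≤ 1) (hα : 0 < α)
    (hcommit : eH ^ β - eL ^ β >
      2 * ((H : ℝ) - 1) * κ * ((eL ^ β + eH ^ β) / 2) * (eH - eL)) :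
    sigmoid (α * deriv (fun θ : ℝ =>
      sigmoid θ * Qval H κ β eL eH eH + (1 - sigmoid θ) * Qval H κ β eL eH eL) 0)
      > 1 / 2 :=
  stmt_9_general H hH κ β eL eH α hκ heL hLH hα hcommit
end
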